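/- Let Q(t₁,t₂) = (α(t₁,t₂), β(t₁,t₂)) be the chord angles of R restricted to [t₁,t₂]: α = arg(R'(t₁)/(R(t₂)−R(t₁))), β = arg(R'(t₂)/(R(t₂)−R(t₁))). Then for all t₁ < t₂, |α(t₁,t₂)| + |β(t₁,t₂)| ≤ 2(t₂ − t₁). Consequently, extending Q by Q(t,t) := (0,0), the map Q is continuous on {(t₁,t₂) : t₁ ≤ t₂}. -/

import Mathlib

open Real Complex Set

noncomputable def xi (t : ℝ) : ℝ :=
  ∫ τ in (0:ℝ)..t, Real.sin τ ^ 2 / Real.sqrt (1 + Real.sin τ ^ 2)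

noncomputable def R (t : ℝ) : ℂ := (Real.sin t : ℂ) + Complex.I * (xi t : ℂ)

noncomputable def alphaAng (t₁ t₂ : ℝ) : ℝ := Complex.arg (deriv R t₁ / (R t₂ - R t₁))
noncomputable def betaAng (t₁ t₂ : ℝ) : ℝ := Complex.arg (deriv R t₂ / (R t₂ - R t₁))

/-- The chord-angle map, extended by `(0,0)` on the diagonal. -/
noncomputable def Q (p : ℝ × ℝ) : ℝ × ℝ :=
  if p.1 < p.2 then (alphaAng p.1 p.2, betaAng p.1 p.2) else (0, 0)

/-!
The tangent `R'(t) = cos t + i ξ'(t)` lies in the closed upper half-plane, and its argument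
`θ(t) = π/2 - 2 arcsin (cos t / √2)` is smooth with `|θ'(t)| = 2 |sin t| / √(1 + sin² t) ≤ 2`.
As `ξ` is strictly increasing, each chord `c = R t₂ - R t₁` lies in the open upper half-plane,
so `α = θ(t₁) - arg c` and `β = θ(t₂) - arg c` with no wrap-around. Rolle's theorem for
`Im ((R t - R t₁) / c)` yields `τ ∈ (t₁, t₂)` with `R'(τ)` a positive multiple of `c`, i.e.
`θ(τ) = arg c`; hence `|α| + |β| ≤ 2 (τ - t₁) + 2 (t₂ - τ)`. The bound gives continuity of `Q`
at the diagonal; off it, `R'(tᵢ) / c` avoids the negative real axis, where `arg` is continuous.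
-/

open Topology Filter

namespace Complex

lemma arg_mem_Ioo_of_im_pos {w : ℂ} (hw : 0 < w.im) : arg w ∈ Ioo 0 π :=
  ⟨(arg_nonneg_iff.2 hw.le).lt_of_ne fun h => hw.ne' (arg_eq_zero_iff.1 h.symm).2,
    arg_lt_pi_iff.2 (Or.inr hw.ne')⟩

lemma arg_sub_arg_mem_Ioo {z w : ℂ} (hz : 0 ≤ z.im) (hw : 0 < w.im) :
    arg z - arg w ∈ Ioo (-π) π := by
  have hw' := arg_mem_Ioo_of_im_pos hw
  constructor <;> linarith [arg_nonneg_iff.2 hz, arg_le_pi z, hw'.1, hw'.2]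

lemma arg_div_eq_sub_of_im_nonneg_of_im_pos {z w : ℂ} (hz₀ : z ≠ 0) (hz : 0 ≤ z.im)
    (hw : 0 < w.im) : arg (z / w) = arg z - arg w := by
  have hw₀ : w ≠ 0 := fun h => by simp [h] at hw
  rw [← arg_coe_angle_toReal_eq_arg, arg_div_coe_angle hz₀ hw₀, ← Real.Angle.coe_sub,
    Real.Angle.toReal_coe_eq_self_iff_mem_Ioc]
  exact Ioo_subset_Ioc_self (arg_sub_arg_mem_Ioo hz hw)

lemma div_mem_slitPlane_of_im_nonneg_of_im_pos {z w : ℂ} (hz₀ : z ≠ 0) (hz : 0 ≤ z.im)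
    (hw : 0 < w.im) : z / w ∈ slitPlane := by
  have hw₀ : w ≠ 0 := fun h => by simp [h] at hw
  rw [mem_slitPlane_iff_arg, arg_div_eq_sub_of_im_nonneg_of_im_pos hz₀ hz hw]
  exact ⟨(arg_sub_arg_mem_Ioo hz hw).2.ne, div_ne_zero hz₀ hw₀⟩

lemma arg_eq_arg_of_im_div_eq_zero {z w : ℂ} (hz₀ : z ≠ 0) (hz : 0 ≤ z.im) (hw : 0 < w.im)
    (h : (z / w).im = 0) : arg z = arg w := by
  have hw₀ : w ≠ 0 := fun h => by simp [h] at hw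
  set k := (z / w).re
  have hzk : z = k * w := by
    rw [← div_mul_cancel₀ z hw₀]
    congr 1
    exact Complex.ext (by simp [k]) (by simp [h])
  have him : z.im = k * w.im := by rw [hzk]; simp
  have hk₀ : k ≠ 0 := by rintro hk; simp [hk] at hzk; exact hz₀ hzk
  have hk : 0 < k := lt_of_le_of_ne (nonneg_of_mul_nonneg_left (him ▸ hz) hw) hk₀.symm
  rw [hzk, arg_real_mul _ hk]

end Complex

theorem exists_im_deriv_div_sub_eq_zero {f f' : ℝ → ℂ} {a b : ℝ} (hab : a < b)
    (hfc : ContinuousOn f (Icc a b)) (hf : ∀ t ∈ Ioo a b, HasDerivAt f (f' t) t) :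
    ∃ τ ∈ Ioo a b, (f' τ / (f b - f a)).im = 0 := by
  set C := f b - f a
  have hg : ∀ t ∈ Ioo a b, HasDerivAt (fun t => ((f t - f a) / C).im) ((f' t / C).im) t :=
    fun t ht => imCLM.hasFDerivAt.comp_hasDerivAt t (((hf t ht).sub_const (f a)).div_const C)
  have hgc : ContinuousOn (fun t => ((f t - f a) / C).im) (Icc a b) :=
    continuous_im.comp_continuousOn ((hfc.sub continuousOn_const).div_const C)
  have hends : ((f a - f a) / C).im = ((f b - f a) / C).im := by
    -- both sides vanish, also when `C = 0` (as `x / 0 = 0`)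
    rcases eq_or_ne C 0 with hC | hC <;> simp [C, hC]
  exact exists_hasDerivAt_eq_zero hab hgc hends hg

theorem exists_arg_deriv_eq_arg_sub {f f' : ℝ → ℂ} {a b : ℝ} (hab : a < b)
    (hfc : ContinuousOn f (Icc a b)) (hf : ∀ t ∈ Ioo a b, HasDerivAt f (f' t) t)
    (hf'₀ : ∀ t ∈ Ioo a b, f' t ≠ 0) (hf' : ∀ t ∈ Ioo a b, 0 ≤ (f' t).im)
    (hchord : 0 < (f b - f a).im) : ∃ τ ∈ Ioo a b, arg (f' τ) = arg (f b - f a) := by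
  obtain ⟨τ, hτ, him⟩ := exists_im_deriv_div_sub_eq_zero hab hfc hf
  exact ⟨τ, hτ, arg_eq_arg_of_im_div_eq_zero (hf'₀ τ hτ) (hf' τ hτ) hchord him⟩

noncomputable def xiDeriv (t : ℝ) : ℝ := Real.sin t ^ 2 / √(1 + Real.sin t ^ 2)

lemma sqrt_one_add_sin_sq_pos (t : ℝ) : 0 < √(1 + Real.sin t ^ 2) :=
  Real.sqrt_pos.2 (by positivity)

lemma xiDeriv_nonneg (t : ℝ) : 0 ≤ xiDeriv t := by unfold xiDeriv; positivity

lemma xiDeriv_pos {t : ℝ} (ht : Real.sin t ≠ 0) : 0 < xiDeriv t := by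
  have := sqrt_one_add_sin_sq_pos t
  unfold xiDeriv; positivity

lemma continuous_xiDeriv : Continuous xiDeriv :=
  Continuous.div (by fun_prop) (by fun_prop) fun t => (sqrt_one_add_sin_sq_pos t).ne'

lemma hasDerivAt_xi (t : ℝ) : HasDerivAt xi (xiDeriv t) t :=
  intervalIntegral.integral_hasDerivAt_right (continuous_xiDeriv.intervalIntegrable 0 t)
    (continuous_xiDeriv.stronglyMeasurableAtFilter _ _) continuous_xiDeriv.continuousAt

lemma xi_strictMono : StrictMono xi := by
  intro a b hab
  have hzeros : {t : ℝ | Real.sin t = 0}.Countable :=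
    (countable_range fun n : ℤ => (n : ℝ) * π).mono fun t ht => Real.sin_eq_zero_iff.1 ht
  obtain ⟨c, hc, hac, hcb⟩ := (hzeros.dense_compl ℝ).exists_between hab
  have hint := continuous_xiDeriv.intervalIntegrable (μ := MeasureTheory.volume)
  have hpos : 0 < ∫ t in a..b, xiDeriv t :=
    intervalIntegral.integral_pos hab continuous_xiDeriv.continuousOn
      (fun t _ => xiDeriv_nonneg t) ⟨c, ⟨hac.le, hcb.le⟩, xiDeriv_pos hc⟩
  rw [← intervalIntegral.integral_interval_sub_left (hint 0 b) (hint 0 a)] at hpos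
  exact sub_pos.1 hpos

lemma hasDerivAt_R (t : ℝ) : HasDerivAt R (Real.cos t + I * xiDeriv t) t :=
  (Real.hasDerivAt_sin t).ofReal_comp.add ((hasDerivAt_xi t).ofReal_comp.const_mul I)

lemma deriv_R (t : ℝ) : deriv R t = Real.cos t + I * xiDeriv t := (hasDerivAt_R t).deriv

lemma continuous_R : Continuous R :=
  continuous_iff_continuousAt.2 fun t => (hasDerivAt_R t).continuousAt

lemma continuous_deriv_R : Continuous (deriv R) := by
  have := continuous_xiDeriv
  rw [funext deriv_R]
  fun_prop

lemma im_deriv_R_nonneg (t : ℝ) : 0 ≤ (deriv R t).im := by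
  simpa [deriv_R] using xiDeriv_nonneg t

lemma deriv_R_ne_zero (t : ℝ) : deriv R t ≠ 0 := by
  intro h
  have hcos : Real.cos t = 0 := by simpa [deriv_R, -ofReal_cos] using congrArg re h
  have hxi : xiDeriv t = 0 := by simpa [deriv_R] using congrArg im h
  refine (xiDeriv_pos fun hsin => ?_).ne' hxi
  nlinarith [Real.sin_sq_add_cos_sq t]

lemma im_chord_pos {t₁ t₂ : ℝ} (h : t₁ < t₂) : 0 < (R t₂ - R t₁).im := by
  simpa [R] using xi_strictMono h

/-- With `sin s = cos t / √2`: `sin (π/2 - 2s) = 1 - 2 sin² s = sin² t` and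
`cos (π/2 - 2s) = 2 sin s cos s = cos t √(1 + sin² t)`, so this is `arg R'(t)`. -/
noncomputable def tangentAngle (t : ℝ) : ℝ := π / 2 - 2 * Real.arcsin (Real.cos t / √2)

lemma abs_cos_div_sqrt_two_le (t : ℝ) : |Real.cos t / √2| ≤ √2 / 2 := by
  rw [abs_div, abs_of_pos (by positivity : (0 : ℝ) < √2),
    div_le_div_iff₀ (by positivity) two_pos]
  nlinarith [Real.abs_cos_le_one t, Real.mul_self_sqrt (zero_le_two : (0 : ℝ) ≤ 2)]

lemma cos_div_sqrt_two_mem_Ioo (t : ℝ) : Real.cos t / √2 ∈ Ioo (-1) 1 := by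
  have h : √2 / 2 < 1 := by
    nlinarith [Real.sq_sqrt (zero_le_two : (0 : ℝ) ≤ 2), Real.sqrt_nonneg 2]
  exact abs_lt.1 ((abs_cos_div_sqrt_two_le t).trans_lt h)

lemma one_sub_sq_cos_div_sqrt_two (t : ℝ) :
    1 - (Real.cos t / √2) ^ 2 = (1 + Real.sin t ^ 2) / 2 := by
  rw [div_pow, Real.sq_sqrt zero_le_two]
  linarith [Real.sin_sq_add_cos_sq t]

lemma sin_tangentAngle (t : ℝ) : Real.sin (tangentAngle t) = Real.sin t ^ 2 := by
  have h := cos_div_sqrt_two_mem_Ioo t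
  rw [tangentAngle, Real.sin_pi_div_two_sub, Real.cos_two_mul_eq_one_sub,
    Real.sin_arcsin h.1.le h.2.le, div_pow, Real.sq_sqrt zero_le_two]
  linarith [Real.sin_sq_add_cos_sq t]

lemma cos_tangentAngle (t : ℝ) :
    Real.cos (tangentAngle t) = Real.cos t * √(1 + Real.sin t ^ 2) := by
  have h := cos_div_sqrt_two_mem_Ioo t
  rw [tangentAngle, Real.cos_pi_div_two_sub, Real.sin_two_mul, Real.sin_arcsin h.1.le h.2.le,
    Real.cos_arcsin, one_sub_sq_cos_div_sqrt_two, Real.sqrt_div' _ zero_le_two]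
  field_simp
  rw [Real.sq_sqrt zero_le_two]
  ring

lemma tangentAngle_mem_Icc (t : ℝ) : tangentAngle t ∈ Icc 0 π := by
  have hb := abs_le.1 (abs_cos_div_sqrt_two_le t)
  have h := cos_div_sqrt_two_mem_Ioo t
  have hπ : Real.arcsin (√2 / 2) = π / 4 := by
    rw [← Real.sin_pi_div_four, Real.arcsin_sin] <;> linarith [Real.pi_pos]
  have hub : Real.arcsin (Real.cos t / √2) ≤ π / 4 := hπ ▸ Real.arcsin_le_arcsin hb.2
  have hlb : -(π / 4) ≤ Real.arcsin (Real.cos t / √2) := by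
    simpa [Real.arcsin_neg, hπ] using Real.arcsin_le_arcsin hb.1
  constructor <;> unfold tangentAngle <;> linarith

lemma hasDerivAt_tangentAngle (t : ℝ) :
    HasDerivAt tangentAngle (2 * Real.sin t / √(1 + Real.sin t ^ 2)) t := by
  have h := cos_div_sqrt_two_mem_Ioo t
  have harcsin := (Real.hasDerivAt_arcsin h.1.ne' h.2.ne).comp t
    ((Real.hasDerivAt_cos t).div_const √2)
  refine ((harcsin.const_mul 2).const_sub (π / 2)).congr_deriv ?_
  rw [one_sub_sq_cos_div_sqrt_two, Real.sqrt_div' _ zero_le_two]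
  have := sqrt_one_add_sin_sq_pos t
  field_simp

lemma abs_two_mul_sin_div_sqrt_one_add_sin_sq_le (t : ℝ) :
    |2 * Real.sin t / √(1 + Real.sin t ^ 2)| ≤ 2 := by
  have hs := sqrt_one_add_sin_sq_pos t
  have h : |Real.sin t| ≤ √(1 + Real.sin t ^ 2) := by
    rw [← Real.sqrt_sq_eq_abs]
    exact Real.sqrt_le_sqrt (by linarith)
  rw [abs_div, abs_of_pos hs, div_le_iff₀ hs, abs_mul, abs_two]
  linarith

lemma abs_tangentAngle_sub_le (s t : ℝ) : |tangentAngle t - tangentAngle s| ≤ 2 * |t - s| := by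
  have hlip : LipschitzWith 2 tangentAngle := lipschitzWith_of_nnnorm_deriv_le
    (fun t => (hasDerivAt_tangentAngle t).differentiableAt) fun t => by
      rw [← NNReal.coe_le_coe, coe_nnnorm, (hasDerivAt_tangentAngle t).deriv]
      exact abs_two_mul_sin_div_sqrt_one_add_sin_sq_le t
  simpa [Real.dist_eq] using hlip.dist_le_mul t s

lemma deriv_R_eq_polar (t : ℝ) :
    deriv R t = ((√(1 + Real.sin t ^ 2))⁻¹ : ℝ) *
      (Real.cos (tangentAngle t) + Real.sin (tangentAngle t) * I) := by
  have hs := (sqrt_one_add_sin_sq_pos t).ne'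
  rw [deriv_R, cos_tangentAngle, sin_tangentAngle]
  apply Complex.ext <;> simp [xiDeriv] <;> field_simp

lemma arg_deriv_R (t : ℝ) : arg (deriv R t) = tangentAngle t := by
  have ht := tangentAngle_mem_Icc t
  rw [deriv_R_eq_polar, arg_real_mul _ (inv_pos.2 (sqrt_one_add_sin_sq_pos t)), ofReal_cos,
    ofReal_sin]
  exact arg_cos_add_sin_mul_I ⟨by linarith [ht.1, Real.pi_pos], ht.2⟩

lemma abs_arg_deriv_R_sub_le (s t : ℝ) :
    |arg (deriv R t) - arg (deriv R s)| ≤ 2 * |t - s| := by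
  simpa only [arg_deriv_R] using abs_tangentAngle_sub_le s t

lemma arg_deriv_R_div_chord (t : ℝ) {t₁ t₂ : ℝ} (h : t₁ < t₂) :
    arg (deriv R t / (R t₂ - R t₁)) = arg (deriv R t) - arg (R t₂ - R t₁) :=
  arg_div_eq_sub_of_im_nonneg_of_im_pos (deriv_R_ne_zero t) (im_deriv_R_nonneg t) (im_chord_pos h)

lemma deriv_R_div_chord_mem_slitPlane (t : ℝ) {t₁ t₂ : ℝ} (h : t₁ < t₂) :
    deriv R t / (R t₂ - R t₁) ∈ slitPlane :=
  div_mem_slitPlane_of_im_nonneg_of_im_pos (deriv_R_ne_zero t) (im_deriv_R_nonneg t)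
    (im_chord_pos h)

lemma exists_arg_deriv_R_eq_arg_chord {t₁ t₂ : ℝ} (h : t₁ < t₂) :
    ∃ τ ∈ Ioo t₁ t₂, arg (deriv R τ) = arg (R t₂ - R t₁) :=
  exists_arg_deriv_eq_arg_sub h continuous_R.continuousOn
    (fun t _ => (hasDerivAt_R t).differentiableAt.hasDerivAt) (fun t _ => deriv_R_ne_zero t)
    (fun t _ => im_deriv_R_nonneg t) (im_chord_pos h)

theorem abs_alphaAng_add_abs_betaAng_le {t₁ t₂ : ℝ} (h : t₁ < t₂) :
    |alphaAng t₁ t₂| + |betaAng t₁ t₂| ≤ 2 * (t₂ - t₁) := by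
  obtain ⟨τ, hτ, hpar⟩ := exists_arg_deriv_R_eq_arg_chord h
  rw [alphaAng, betaAng, arg_deriv_R_div_chord _ h, arg_deriv_R_div_chord _ h, ← hpar]
  have h₁ := abs_arg_deriv_R_sub_le τ t₁
  have h₂ := abs_arg_deriv_R_sub_le τ t₂
  rw [abs_of_neg (by linarith [hτ.1] : t₁ - τ < 0)] at h₁
  rw [abs_of_pos (by linarith [hτ.2] : 0 < t₂ - τ)] at h₂
  linarith

lemma norm_Q_le {p : ℝ × ℝ} (hp : p.1 ≤ p.2) : ‖Q p‖ ≤ 2 * (p.2 - p.1) := by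
  unfold Q
  split_ifs with h
  · have := abs_alphaAng_add_abs_betaAng_le h
    rw [Prod.norm_mk, Real.norm_eq_abs, Real.norm_eq_abs]
    exact max_le (by linarith [abs_nonneg (betaAng p.1 p.2)])
      (by linarith [abs_nonneg (alphaAng p.1 p.2)])
  · simpa using hp

lemma continuousAt_Q {p : ℝ × ℝ} (hp : p.1 < p.2) : ContinuousAt Q p := by
  have hQ : Q =ᶠ[𝓝 p] fun q => (alphaAng q.1 q.2, betaAng q.1 q.2) := by
    filter_upwards [isOpen_lt continuous_fst continuous_snd |>.mem_nhds hp] with q hq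
    simp only [Q, if_pos hq]
  have hchord : R p.2 - R p.1 ≠ 0 := fun h => (im_chord_pos hp).ne' (by simp [h])
  have := continuous_R
  have := continuous_deriv_R
  have hα : ContinuousAt (fun q : ℝ × ℝ => deriv R q.1 / (R q.2 - R q.1)) p := by
    fun_prop (disch := exact hchord)
  have hβ : ContinuousAt (fun q : ℝ × ℝ => deriv R q.2 / (R q.2 - R q.1)) p := by
    fun_prop (disch := exact hchord)
  refine ContinuousAt.congr ?_ hQ.symm
  exact ((continuousAt_arg (deriv_R_div_chord_mem_slitPlane p.1 hp)).comp (x := p) hα).prodMk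
    ((continuousAt_arg (deriv_R_div_chord_mem_slitPlane p.2 hp)).comp (x := p) hβ)

lemma continuousWithinAt_Q_of_eq {p : ℝ × ℝ} (hp : p.1 = p.2) :
    ContinuousWithinAt Q {q | q.1 ≤ q.2} p := by
  have hQp : Q p = 0 := by simp [Q, hp]
  have hlim : Tendsto (fun q : ℝ × ℝ => 2 * (q.2 - q.1)) (𝓝[{q | q.1 ≤ q.2}] p) (𝓝 0) := by
    have : Continuous (fun q : ℝ × ℝ => 2 * (q.2 - q.1)) := by fun_prop
    simpa [hp] using (this.tendsto p).mono_left nhdsWithin_le_nhds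
  rw [ContinuousWithinAt, hQp]
  exact squeeze_zero_norm' (eventually_nhdsWithin_of_forall fun q hq => norm_Q_le hq) hlim

theorem chord_angle_bound_and_continuity :
    (∀ t₁ t₂ : ℝ, t₁ < t₂ →
      |alphaAng t₁ t₂| + |betaAng t₁ t₂| ≤ 2 * (t₂ - t₁)) ∧
    ContinuousOn Q {p : ℝ × ℝ | p.1 ≤ p.2} :=
  ⟨fun _ _ => abs_alphaAng_add_abs_betaAng_le, fun _ hp =>
    hp.lt_or_eq.elim (fun h => (continuousAt_Q h).continuousWithinAt) continuousWithinAt_Q_of_eq⟩
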